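/- Let β > 0 and let f be defined on the open strip S_β = {z ∈ ℂ : |Im z| < 2π/β} by f(z) = z/(1 - e^{-βz}) for z ≠ 0 and f(0) = 1/β. Then there exists a function h analytic on S_β such that h(z)² = f(z) for all z ∈ S_β and h(u) = √(u/(1 - e^{-βu})) > 0 for all real u ≠ 0 (with h(0) = 1/√β); i.e. the square root appearing in the definition of g_β admits an analytic extension to the strip S_β. -/

import Mathlib

/-!
With `w = βz/2` one has `f(z) = e^w / (β · sinh w / w)`. On the strip `|Im w| < π` the entire
function `sinh w / w` (`dslope sinh 0`) avoids `(-∞, 0]`: writing `w = x + iy`, the imaginary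
part of `sinh w · w̄` is `x cosh x sin y - y sinh x cos y`, which cannot vanish off the axes
because `tanh x < x` and `y cos y < sin y`, and on the axes the real part is positive. The
principal branch therefore gives the analytic root `e^{w/2} (β sinh w / w)^{-1/2}`, which is
positive on the real line.
-/

open Complex

namespace Real

theorem sinh_lt_mul_cosh {x : ℝ} (hx : 0 < x) : sinh x < x * cosh x := by
  obtain ⟨c, ⟨hc0, hcx⟩, hc⟩ := exists_hasDerivAt_eq_slope sinh cosh hx
    continuous_sinh.continuousOn fun t _ ↦ hasDerivAt_sinh t
  have hcosh : cosh c < cosh x := cosh_lt_cosh.2 (by rw [abs_of_pos hc0, abs_of_pos hx]; exact hcx)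
  rw [sinh_zero, sub_zero, sub_zero, eq_div_iff hx.ne'] at hc
  nlinarith

theorem mul_cos_lt_sin {y : ℝ} (hy : 0 < y) (hyπ : y < π) : y * cos y < sin y := by
  have hsin := sin_pos_of_pos_of_lt_pi hy hyπ
  rcases le_or_gt (cos y) 0 with hcos | hcos
  · nlinarith
  · have hyπ2 : y < π / 2 := by
      by_contra! h
      exact (cos_nonpos_of_pi_div_two_le_of_le h (by linarith [pi_pos])).not_gt hcos
    have := lt_tan hy hyπ2
    rwa [tan_eq_sin_div_cos, lt_div_iff₀ hcos] at this

theorem mul_sinh_mul_cos_lt {x y : ℝ} (hx : 0 < x) (hy : 0 < y) (hyπ : y < π) :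
    y * sinh x * cos y < x * cosh x * sin y :=
  calc y * sinh x * cos y = y * cos y * sinh x := by ring
    _ < sin y * sinh x := mul_lt_mul_of_pos_right (mul_cos_lt_sin hy hyπ) (sinh_pos_iff.2 hx)
    _ < sin y * (x * cosh x) :=
        mul_lt_mul_of_pos_left (sinh_lt_mul_cosh hx) (sin_pos_of_pos_of_lt_pi hy hyπ)
    _ = x * cosh x * sin y := by ring

theorem mul_cosh_mul_sin_ne {x y : ℝ} (hx : x ≠ 0) (hy : y ≠ 0) (hyπ : |y| < π) :
    x * cosh x * sin y - y * sinh x * cos y ≠ 0 := by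
  have key := mul_sinh_mul_cos_lt (abs_pos.2 hx) (abs_pos.2 hy) hyπ
  rcases hx.lt_or_gt with hx | hx <;> rcases hy.lt_or_gt with hy | hy <;>
    simp only [abs_of_neg, abs_of_pos, hx, hy, sinh_neg, cosh_neg, sin_neg, cos_neg] at key <;>
    intro h <;> linarith

theorem sqrt_eq_of_ofReal_sq_eq {p a : ℝ} (hp : 0 ≤ p) (h : (p : ℂ) ^ 2 = a) :
    √a = p := by
  rw [← sqrt_sq hp]
  congr 1
  exact_mod_cast h.symm

end Real

namespace Complex

theorem sinh_re (z : ℂ) : (sinh z).re = Real.sinh z.re * Real.cos z.im := by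
  conv_lhs => rw [← re_add_im z, sinh_add, sinh_mul_I, cosh_mul_I]
  simp [← ofReal_sinh, ← ofReal_cosh, ← ofReal_sin, ← ofReal_cos]

theorem sinh_im (z : ℂ) : (sinh z).im = Real.cosh z.re * Real.sin z.im := by
  conv_lhs => rw [← re_add_im z, sinh_add, sinh_mul_I, cosh_mul_I]
  simp [← ofReal_sinh, ← ofReal_cosh, ← ofReal_sin, ← ofReal_cos]


theorem sinh_div_self_mem_slitPlane {w : ℂ} (hw : w ≠ 0) (him : |w.im| < Real.pi) :
    sinh w / w ∈ slitPlane := by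
  have hn : 0 < normSq w := normSq_pos.2 hw
  rw [mem_slitPlane_iff, div_re, div_im, sinh_re, sinh_im]
  by_cases hy : w.im = 0
  · have hx : w.re ≠ 0 := fun hx ↦ hw (ext hx hy)
    have : 0 < Real.sinh w.re * w.re := by
      rcases hx.lt_or_gt with hx | hx
      · exact mul_pos_of_neg_of_neg (Real.sinh_neg_iff.2 hx) hx
      · exact mul_pos (Real.sinh_pos_iff.2 hx) hx
    left
    simp only [hy, Real.cos_zero, Real.sin_zero, mul_one, mul_zero, zero_div, add_zero]
    positivity
  by_cases hx : w.re = 0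
  · have hyπ := abs_lt.1 him
    have : 0 < Real.sin w.im * w.im := by
      rcases Ne.lt_or_gt hy with hy | hy
      · exact mul_pos_of_neg_of_neg (Real.sin_neg_of_neg_of_neg_pi_lt hy hyπ.1) hy
      · exact mul_pos (Real.sin_pos_of_pos_of_lt_pi hy hyπ.2) hy
    left
    simp only [hx, Real.sinh_zero, Real.cosh_zero, zero_mul, mul_zero, zero_div, one_mul,
      zero_add]
    positivity
  · right
    rw [← sub_div]
    refine div_ne_zero ?_ hn.ne'
    convert Real.mul_cosh_mul_sin_ne hx hy him using 1
    ring

theorem dslope_sinh_zero : dslope sinh 0 0 = 1 := by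
  simp [dslope_same, Complex.deriv_sinh]

theorem dslope_sinh_of_ne {w : ℂ} (hw : w ≠ 0) : dslope sinh 0 w = sinh w / w := by
  simp [dslope_of_ne _ hw, slope_def_field]

theorem differentiable_dslope_sinh : Differentiable ℂ (dslope sinh 0) := by
  rw [← differentiableOn_univ, differentiableOn_dslope Filter.univ_mem]
  exact differentiable_sinh.differentiableOn

theorem dslope_sinh_mem_slitPlane {w : ℂ} (him : |w.im| < Real.pi) :
    dslope sinh 0 w ∈ slitPlane := by
  rcases eq_or_ne w 0 with rfl | hw
  · rw [dslope_sinh_zero]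
    exact one_mem_slitPlane
  · rw [dslope_sinh_of_ne hw]
    exact sinh_div_self_mem_slitPlane hw him

theorem dslope_sinh_ofReal (x : ℝ) : dslope sinh 0 (x : ℂ) = (dslope Real.sinh 0 x : ℝ) := by
  rcases eq_or_ne x 0 with rfl | hx
  · simp [dslope_same, Complex.deriv_sinh, Real.deriv_sinh]
  · rw [dslope_sinh_of_ne (ofReal_ne_zero.2 hx), dslope_of_ne _ hx, slope_def_field]
    simp

theorem ofReal_mul_mem_slitPlane {r : ℝ} (hr : 0 < r) {z : ℂ} (hz : z ∈ slitPlane) :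
    (r : ℂ) * z ∈ slitPlane := by
  rw [mem_slitPlane_iff, re_ofReal_mul, im_ofReal_mul] at *
  exact hz.imp (mul_pos hr) (mul_ne_zero hr.ne')

theorem cpow_neg_half_sq (a : ℂ) : (a ^ (-(1 / 2) : ℂ)) ^ 2 = a⁻¹ := by
  rw [← cpow_nat_mul, ← cpow_neg_one]
  norm_num

end Complex

theorem abs_im_mul_div_two_lt_pi {β : ℝ} (hβ : 0 < β) {z : ℂ} (hz : |z.im| < 2 * Real.pi / β) :
    |((β : ℂ) * z / 2).im| < Real.pi := by
  have : ((β : ℂ) * z / 2).im = β * z.im / 2 := by simp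
  rw [this, abs_div, abs_mul, abs_of_pos hβ, abs_two]
  rw [lt_div_iff₀ hβ] at hz
  linarith

theorem one_sub_exp_neg_two_mul (w : ℂ) : 1 - exp (-(2 * w)) = 2 * sinh w * exp (-w) := by
  rw [two_mul, neg_add, exp_add, two_sinh]
  have : exp w * exp (-w) = 1 := by rw [← exp_add, add_neg_cancel, exp_zero]
  linear_combination this * (-1 : ℂ)

theorem div_one_sub_exp_neg_mul {β z : ℂ} (hβ : β ≠ 0) (hz : z ≠ 0)
    (hs : dslope sinh 0 (β * z / 2) ≠ 0) :
    z / (1 - exp (-β * z)) = exp (β * z / 2) / (β * dslope sinh 0 (β * z / 2)) := by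
  have hw : β * z / 2 ≠ 0 := by simp [hβ, hz]
  rw [dslope_sinh_of_ne hw] at hs ⊢
  have hsinh : sinh (β * z / 2) ≠ 0 := (div_ne_zero_iff.1 hs).1
  rw [show -β * z = -(2 * (β * z / 2)) by ring, one_sub_exp_neg_two_mul, exp_neg]
  field_simp

noncomputable def thermalSqrt (β : ℝ) (z : ℂ) : ℂ :=
  exp (β * z / 4) * (β * dslope sinh 0 (β * z / 2)) ^ (-(1 / 2) : ℂ)

theorem analyticAt_thermalSqrt {β : ℝ} (hβ : 0 < β) {z : ℂ} (hz : |z.im| < 2 * Real.pi / β) :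
    AnalyticAt ℂ (thermalSqrt β) z := by
  have hS : AnalyticAt ℂ (fun z ↦ dslope sinh 0 ((β : ℂ) * z / 2)) z :=
    differentiable_dslope_sinh.analyticAt _ |>.comp (by fun_prop)
  refine (analyticAt_cexp.comp (by fun_prop)).mul
    ((analyticAt_const.mul hS).cpow analyticAt_const ?_)
  exact ofReal_mul_mem_slitPlane hβ (dslope_sinh_mem_slitPlane (abs_im_mul_div_two_lt_pi hβ hz))

theorem thermalSqrt_sq (β : ℝ) (z : ℂ) :
    thermalSqrt β z ^ 2 = exp (β * z / 2) / (β * dslope sinh 0 (β * z / 2)) := by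
  rw [thermalSqrt, mul_pow, cpow_neg_half_sq, ← exp_nat_mul, div_eq_mul_inv]
  push_cast
  ring_nf

theorem exists_thermalSqrt_ofReal {β : ℝ} (hβ : 0 < β) (u : ℝ) :
    ∃ p : ℝ, 0 < p ∧ thermalSqrt β u = p := by
  set s := dslope Real.sinh 0 (β * u / 2)
  have hS : dslope sinh 0 ((β : ℂ) * u / 2) = s := by
    rw [← dslope_sinh_ofReal]
    push_cast
    rfl
  have hs : 0 < s := by
    rw [← ofReal_mem_slitPlane, ← hS]
    exact dslope_sinh_mem_slitPlane (by simp [Real.pi_pos])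
  refine ⟨Real.exp (β * u / 4) * (β * s) ^ (-(1 / 2) : ℝ), by positivity, ?_⟩
  rw [thermalSqrt, hS, ofReal_mul, ofReal_cpow (by positivity), ofReal_exp]
  push_cast
  ring_nf

/-- The square root `√(u/(1-e^{-βu}))` appearing in the gluing map (7)
admits an analytic extension to the strip `S_β = {z : |Im z| < 2π/β}`: there is a
function `h`, analytic on `S_β`, with `h(z)² = f(z)` there (`f(z) = z/(1-e^{-βz})`,
`f(0) = 1/β`), and `h(u) = √(u/(1-e^{-βu})) > 0` for real `u ≠ 0`, `h(0) = 1/√β`. -/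
theorem thermal_weight_analytic_square_root
    (β : ℝ) (hβ : 0 < β) (f : ℂ → ℂ)
    (hf : ∀ z : ℂ, z ≠ 0 → f z = z / (1 - Complex.exp (-(β : ℂ) * z)))
    (hf0 : f 0 = 1 / (β : ℂ)) :
    ∃ h : ℂ → ℂ,
      (∀ z ∈ {z : ℂ | |z.im| < 2 * Real.pi / β}, AnalyticAt ℂ h z) ∧
      (∀ z ∈ {z : ℂ | |z.im| < 2 * Real.pi / β}, h z ^ 2 = f z) ∧
      (∀ u : ℝ, u ≠ 0 →
        h u = (Real.sqrt (u / (1 - Real.exp (-β * u))) : ℂ) ∧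
          0 < Real.sqrt (u / (1 - Real.exp (-β * u)))) ∧
      h 0 = ((1 / Real.sqrt β : ℝ) : ℂ) := by
  have hsq : ∀ z : ℂ, |z.im| < 2 * Real.pi / β → thermalSqrt β z ^ 2 = f z := by
    intro z hz
    rw [thermalSqrt_sq]
    rcases eq_or_ne z 0 with rfl | hz0
    · simp [hf0]
    · have hS := slitPlane_ne_zero (dslope_sinh_mem_slitPlane (abs_im_mul_div_two_lt_pi hβ hz))
      rw [hf z hz0, div_one_sub_exp_neg_mul (ofReal_ne_zero.2 hβ.ne') hz0 hS]
  have hsq_real (u : ℝ) : thermalSqrt β u ^ 2 = f u := hsq u (by simp [Real.pi_pos, hβ])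
  refine ⟨thermalSqrt β, fun z hz ↦ analyticAt_thermalSqrt hβ hz, hsq, fun u hu ↦ ?_, ?_⟩
  · obtain ⟨p, hp, hpu⟩ := exists_thermalSqrt_ofReal hβ u
    have hpsq := hsq_real u
    rw [hpu, hf u (ofReal_ne_zero.2 hu)] at hpsq
    rw [Real.sqrt_eq_of_ofReal_sq_eq hp.le (by exact_mod_cast hpsq)]
    exact ⟨hpu, hp⟩
  · obtain ⟨p, hp, hpu⟩ := exists_thermalSqrt_ofReal hβ 0
    have hpsq := hsq_real 0
    rw [hpu, ofReal_zero, hf0] at hpsq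
    rw [one_div, ← Real.sqrt_inv, ← one_div,
      Real.sqrt_eq_of_ofReal_sq_eq hp.le (by exact_mod_cast hpsq), ← hpu, ofReal_zero]
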